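/- arXiv:2112.01710 — 3 statements merged into one kernel-verified Lean document; each statement's English description precedes it below -/
import Mathlib

section
/- Let Δ ≥ 1, let T be a tree with proper 2-coloring χ such that both color classes χ⁻¹(0) and χ⁻¹(1) contain a vertex of degree at least Δ in T. Let H be a Δ-uniform hypergraph with vertex–hyperedge incidence graph G. If S ⊆ V(H) is a vertex cover of H, then S (viewed as a subset of V(G)) is a T-transversal of G, i.e., the graph obtained from G by deleting the vertices of S contains no subgraph isomorphic to T. -/
/-- The vertex–hyperedge incidence graph of a membership relation `mem : α → β → Prop`:
the bipartite graph on `α ⊕ β` in which `Sum.inl a` is adjacent to `Sum.inr b`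
iff `mem a b`. -/
def incidenceGraph {α β : Type*} (mem : α → β → Prop) : SimpleGraph (α ⊕ β) where
  Adj x y := (∃ a b, x = Sum.inl a ∧ y = Sum.inr b ∧ mem a b) ∨
             (∃ a b, x = Sum.inr b ∧ y = Sum.inl a ∧ mem a b)
  symm := by
    constructor
    rintro x y (⟨a, b, rfl, rfl, h⟩ | ⟨a, b, rfl, rfl, h⟩)
    · exact Or.inr ⟨a, b, rfl, rfl, h⟩
    · exact Or.inl ⟨a, b, rfl, rfl, h⟩
  loopless := by
    constructor
    rintro x (⟨a, b, h1, h2, -⟩ | ⟨a, b, h1, h2, -⟩) <;> simp_all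

/-- `S` is a `T`-transversal of `G`: every copy of `T` in `G` (i.e. every injective graph
homomorphism from `T` to `G`) meets `S`. -/
def IsTTransversal {α β : Type*} (T : SimpleGraph α) (G : SimpleGraph β) (S : Set β) : Prop :=
  ∀ f : α → β, Function.Injective f → (∀ u v, T.Adj u v → G.Adj (f u) (f v)) →
    ∃ u, f u ∈ S

/-!
A homomorphic image of a connected graph in a bipartite graph respects 2-colorings up to a swap,
since walks keep their parity. So the two color classes of `T` land on different sides of the
incidence graph `G`, and some vertex `v` of degree at least `Δ` is sent to a hyperedge `e`. The
neighbors of `v` are sent injectively into the `Δ` vertices of `e`, hence onto them, and one of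
those lies in the cover `S`.
-/

namespace SimpleGraph

variable {V W : Type*} {G : SimpleGraph V} {H : SimpleGraph W}

theorem Coloring.apply_map_ne_of_ne (c : G.Coloring Bool) (d : H.Coloring Bool) (f : G →g H)
    {u v : V} (huv : G.Reachable u v) (h : c u ≠ c v) : d (f u) ≠ d (f v) := by
  obtain ⟨p⟩ := huv
  have hodd : ¬Even (p.map f).length := by
    rw [Walk.length_map, c.even_length_iff_congr p, ← Bool.eq_iff_iff]
    exact h
  rwa [d.even_length_iff_congr, ← Bool.eq_iff_iff] at hodd

theorem Hom.exists_adj_map_eq_of_card_le (f : G →g H) (hf : Function.Injective f) {v : V}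
    [Fintype (G.neighborSet v)] {t : Finset W} (ht : H.neighborSet (f v) ⊆ t)
    (hcard : t.card ≤ G.degree v) : ∀ w ∈ t, ∃ u, G.Adj v u ∧ f u = w := by
  intro w hw
  obtain ⟨u, hu, rfl⟩ := Finset.surj_on_of_inj_on_of_card_le (s := G.neighborFinset v)
    (fun u _ => f u) (fun u hu => ht (f.map_adj ((mem_neighborFinset G v u).mp hu)))
    (fun _ _ _ _ h => hf h) (by rwa [card_neighborFinset_eq_degree]) w hw
  exact ⟨u, (mem_neighborFinset G v u).mp hu, rfl⟩

end SimpleGraph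

section incidenceGraph

variable {α β : Type*} {mem : α → β → Prop}

theorem incidenceGraph_adj_inr_iff {b : β} {x : α ⊕ β} :
    (incidenceGraph mem).Adj (Sum.inr b) x ↔ ∃ a, mem a b ∧ x = Sum.inl a := by
  constructor
  · rintro (⟨a, b', h, -, -⟩ | ⟨a, b', h, rfl, hab⟩)
    · cases h
    · cases h
      exact ⟨a, hab, rfl⟩
  · rintro ⟨a, hab, rfl⟩
    exact Or.inr ⟨a, b, rfl, rfl, hab⟩

theorem incidenceGraph_neighborSet_inr_subset {b : β} {e : Finset α}
    (he : ∀ a, mem a b → a ∈ e) :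
    (incidenceGraph mem).neighborSet (Sum.inr b) ⊆ (e.map .inl : Finset (α ⊕ β)) := by
  intro x hx
  obtain ⟨a, hab, rfl⟩ := incidenceGraph_adj_inr_iff.mp hx
  simpa using he a hab

def incidenceGraph.isLeftColoring : (incidenceGraph mem).Coloring Bool :=
  SimpleGraph.Coloring.mk Sum.isLeft <| by
    rintro x y (⟨a, b, rfl, rfl, -⟩ | ⟨a, b, rfl, rfl, -⟩) <;> simp

end incidenceGraph

theorem cover_gives_transversal_general {α V : Type*} [Fintype α]
    (Δ : ℕ)
    (T : SimpleGraph α) [DecidableRel T.Adj] (htree : T.IsTree)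
    (χ : α → Fin 2) (hχ : ∀ u v, T.Adj u v → χ u ≠ χ v)
    (h0 : ∃ v, χ v = 0 ∧ Δ ≤ T.degree v)
    (h1 : ∃ v, χ v = 1 ∧ Δ ≤ T.degree v)
    (E : Finset (Finset V)) (hunif : ∀ e ∈ E, e.card = Δ)
    (S : Set V) (hS : ∀ e ∈ E, ∃ v ∈ e, v ∈ S) :
    IsTTransversal T
      (incidenceGraph (fun (v : V) (e : {e : Finset V // e ∈ E}) => v ∈ e.val))
      (Sum.inl '' S) := by
  intro f hinj hhom
  let φ : T →g incidenceGraph _ := ⟨f, hhom _ _⟩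
  let c := SimpleGraph.recolorOfEquiv T finTwoEquiv (SimpleGraph.Coloring.mk χ (hχ _ _))
  obtain ⟨v₀, hχ₀, hdeg₀⟩ := h0
  obtain ⟨v₁, hχ₁, hdeg₁⟩ := h1
  have hsides : (f v₀).isLeft ≠ (f v₁).isLeft :=
    c.apply_map_ne_of_ne incidenceGraph.isLeftColoring φ (htree.connected.preconnected v₀ v₁)
      (finTwoEquiv.injective.ne (show χ v₀ ≠ χ v₁ by simp [hχ₀, hχ₁]))
  obtain ⟨v, hdeg, e, hfv⟩ : ∃ v, Δ ≤ T.degree v ∧ ∃ e, f v = Sum.inr e := by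
    rcases hl₀ : (f v₀).isLeft
    · exact ⟨v₀, hdeg₀, Sum.isRight_iff.mp (by simpa using hl₀)⟩
    · exact ⟨v₁, hdeg₁, Sum.isRight_iff.mp (by simpa [hl₀] using hsides.symm)⟩
  have hcover := φ.exists_adj_map_eq_of_card_le hinj (v := v) (t := e.val.map .inl)
    (by
      rw [show φ v = Sum.inr e from hfv]
      exact incidenceGraph_neighborSet_inr_subset fun _ h => h)
    (by rwa [Finset.card_map, hunif e.val e.property])
  obtain ⟨s, hse, hsS⟩ := hS e.val e.property
  obtain ⟨u, -, hu⟩ := hcover (Sum.inl s) (Finset.mem_map_of_mem _ hse)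
  exact ⟨u, s, hsS, hu.symm⟩

/-- Let `Δ ≥ 1` and let `T` be a tree whose proper 2-coloring `χ` has a vertex of degree at
least `Δ` in each color class.  If `S` is a vertex cover of a `Δ`-uniform hypergraph
`H = (V, E)`, then `S`, viewed inside the vertex–hyperedge incidence graph `G` of `H`, is a
`T`-transversal of `G`. -/
theorem cover_gives_transversal {α V : Type*} [Fintype α]
    (Δ : ℕ) (hΔ : 1 ≤ Δ)
    (T : SimpleGraph α) [DecidableRel T.Adj] (htree : T.IsTree)
    (χ : α → Fin 2) (hχ : ∀ u v, T.Adj u v → χ u ≠ χ v)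
    (h0 : ∃ v, χ v = 0 ∧ Δ ≤ T.degree v)
    (h1 : ∃ v, χ v = 1 ∧ Δ ≤ T.degree v)
    (E : Finset (Finset V)) (hunif : ∀ e ∈ E, e.card = Δ)
    (S : Set V) (hS : ∀ e ∈ E, ∃ v ∈ e, v ∈ S) :
    IsTTransversal T
      (incidenceGraph (fun (v : V) (e : {e : Finset V // e ∈ E}) => v ∈ e.val))
      (Sum.inl '' S) :=
  cover_gives_transversal_general Δ T htree χ hχ h0 h1 E hunif S hS
end

section
/- Let G be a finite simple graph, let T be a graph with k vertices, and let F ⊆ V(G) be a union of pairwise disjoint 'twin classes', where each twin class P ⊆ F is a set of pairwise nonadjacent vertices of G that all have the same open neighborhood in G. Let R ⊆ V(G) be a T-transversal of G such that every twin class P satisfies |P \ R| ≥ k. Then R \ F is also a T-transversal of G. -/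
open Function

theorem exists_injective_mapsTo_of_card_le_ncard {α β : Type*} [Finite α] {s : Set β}
    (h : Nat.card α ≤ s.ncard) : ∃ g : α → β, Injective g ∧ ∀ a, g a ∈ s := by
  obtain ⟨e⟩ : Nonempty (α ↪ s) := by
    rcases s.finite_or_infinite with hs | hs
    · have := hs.to_subtype
      have := Fintype.ofFinite α
      have := Fintype.ofFinite s
      apply Function.Embedding.nonempty_of_card_le
      rwa [← Nat.card_eq_fintype_card, ← Nat.card_eq_fintype_card, Nat.card_coe_set_eq]
    · rw [hs.ncard, Nat.le_zero, Finite.card_eq_zero_iff] at h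
      exact ⟨Function.Embedding.ofIsEmpty⟩
  exact ⟨fun a => e a, Subtype.val_injective.comp e.injective, fun a => (e a).2⟩

theorem SimpleGraph.map_adj_of_neighborSet_eq {α β : Type*} {T : SimpleGraph α}
    {G : SimpleGraph β} {f f' : α → β} (hf : ∀ u v, T.Adj u v → G.Adj (f u) (f v))
    (hnbr : ∀ u, G.neighborSet (f' u) = G.neighborSet (f u)) :
    ∀ u v, T.Adj u v → G.Adj (f' u) (f' v) := by
  intro u v huv
  have hv : f v ∈ G.neighborSet (f' u) := hnbr u ▸ hf u v huv
  have hu : f' u ∈ G.neighborSet (f' v) := hnbr v ▸ hv.symm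
  exact hu.symm

section TwinReplacement

variable {α β : Type*} (P : Set (Set β)) (cls : β → Set β) (g : Set β → α → β) (f : α → β)

noncomputable def twinReplace : α → β := fun u =>
  open Classical in if f u ∈ ⋃₀ P then g (cls (f u)) u else f u

variable {P cls g f}

theorem twinReplace_of_mem {u : α} (hu : f u ∈ ⋃₀ P) :
    twinReplace P cls g f u = g (cls (f u)) u := if_pos hu

theorem twinReplace_of_notMem {u : α} (hu : f u ∉ ⋃₀ P) :
    twinReplace P cls g f u = f u := if_neg hu

variable (hcls : ∀ x ∈ ⋃₀ P, cls x ∈ P ∧ x ∈ cls x) {R : Set β}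
  (hg : ∀ Q ∈ P, Injective (g Q) ∧ ∀ a, g Q a ∈ Q \ R)
include hcls hg

theorem twinReplace_mem_sdiff {u : α} (hu : f u ∈ ⋃₀ P) :
    twinReplace P cls g f u ∈ cls (f u) \ R :=
  twinReplace_of_mem hu ▸ (hg _ (hcls _ hu).1).2 u

theorem twinReplace_mem_sUnion_iff (u : α) :
    twinReplace P cls g f u ∈ ⋃₀ P ↔ f u ∈ ⋃₀ P := by
  by_cases hu : f u ∈ ⋃₀ P
  · exact iff_of_true ⟨_, (hcls _ hu).1, (twinReplace_mem_sdiff hcls hg hu).1⟩ hu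
  · rw [twinReplace_of_notMem hu]

theorem twinReplace_injective (hP : P.PairwiseDisjoint id) (hf : Injective f) :
    Injective (twinReplace P cls g f) := by
  intro u v huv
  by_cases hu : f u ∈ ⋃₀ P
  · have hv : f v ∈ ⋃₀ P := by
      rwa [← twinReplace_mem_sUnion_iff hcls hg, ← huv, twinReplace_mem_sUnion_iff hcls hg]
    have hQ : cls (f u) = cls (f v) :=
      hP.elim_set (hcls _ hu).1 (hcls _ hv).1 _ (twinReplace_mem_sdiff hcls hg hu).1
        (huv ▸ (twinReplace_mem_sdiff hcls hg hv).1)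
    rw [twinReplace_of_mem hu, twinReplace_of_mem hv, hQ] at huv
    exact (hg _ (hcls _ hv).1).1 huv
  · have hv : f v ∉ ⋃₀ P := by
      rwa [← twinReplace_mem_sUnion_iff hcls hg, ← huv, twinReplace_mem_sUnion_iff hcls hg]
    rw [twinReplace_of_notMem hu, twinReplace_of_notMem hv] at huv
    exact hf huv

theorem mem_sdiff_of_twinReplace_mem {u : α} (hu : twinReplace P cls g f u ∈ R) :
    f u ∈ R \ ⋃₀ P := by
  by_cases hfu : f u ∈ ⋃₀ P
  · exact absurd hu (twinReplace_mem_sdiff hcls hg hfu).2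
  · exact ⟨twinReplace_of_notMem hfu ▸ hu, hfu⟩

theorem neighborSet_twinReplace {G : SimpleGraph β}
    (htwin : ∀ Q ∈ P, ∀ u ∈ Q, ∀ v ∈ Q, G.neighborSet u = G.neighborSet v) (u : α) :
    G.neighborSet (twinReplace P cls g f u) = G.neighborSet (f u) := by
  by_cases hu : f u ∈ ⋃₀ P
  · exact htwin _ (hcls _ hu).1 _ (twinReplace_mem_sdiff hcls hg hu).1 _ (hcls _ hu).2
  · rw [twinReplace_of_notMem hu]

end TwinReplacement

theorem transversal_avoids_twins_general {α β : Type*} [Fintype α]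
    (k : ℕ) (hk : Fintype.card α = k)
    (T : SimpleGraph α) (G : SimpleGraph β)
    (F : Set β) (P : Set (Set β))
    (hF : F = ⋃₀ P)
    (hdisj : P.Pairwise Disjoint)
    (htwin : ∀ Q ∈ P, ∀ u ∈ Q, ∀ v ∈ Q, G.neighborSet u = G.neighborSet v)
    (R : Set β) (hR : IsTTransversal T G R)
    (hsize : ∀ Q ∈ P, k ≤ (Q \ R).ncard) :
    IsTTransversal T G (R \ F) := by
  intro f hf hhom
  choose! cls hcls using fun x (hx : x ∈ ⋃₀ P) => Set.mem_sUnion.mp hx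
  have hg : ∀ Q, ∃ g : α → β, Q ∈ P → Injective g ∧ ∀ a, g a ∈ Q \ R := fun Q => by
    by_cases hQ : Q ∈ P
    · obtain ⟨g, hg⟩ := exists_injective_mapsTo_of_card_le_ncard
        (Nat.card_eq_fintype_card.trans hk ▸ hsize Q hQ)
      exact ⟨g, fun _ => hg⟩
    · exact ⟨f, hQ.elim⟩
  choose g hg using hg
  obtain ⟨u, hu⟩ := hR (twinReplace P cls g f) (twinReplace_injective hcls hg hdisj hf)
    (SimpleGraph.map_adj_of_neighborSet_eq hhom (neighborSet_twinReplace hcls hg htwin))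
  exact ⟨u, hF ▸ mem_sdiff_of_twinReplace_mem hcls hg hu⟩

/-- Let `T` have `k` vertices and let `F ⊆ V(G)` be a union of pairwise disjoint twin classes:
each class `P` consists of pairwise nonadjacent vertices sharing the same open neighborhood.
If `R` is a `T`-transversal of `G` such that every twin class `P` satisfies `|P \ R| ≥ k`,
then `R \ F` is also a `T`-transversal of `G`. -/
theorem transversal_avoids_twins {α β : Type*} [Fintype α] [Fintype β]
    (k : ℕ) (hk : Fintype.card α = k)
    (T : SimpleGraph α) (G : SimpleGraph β)
    (F : Set β) (P : Set (Set β))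
    (hF : F = ⋃₀ P)
    (hdisj : P.Pairwise Disjoint)
    (hindep : ∀ Q ∈ P, ∀ u ∈ Q, ∀ v ∈ Q, ¬ G.Adj u v)
    (htwin : ∀ Q ∈ P, ∀ u ∈ Q, ∀ v ∈ Q, G.neighborSet u = G.neighborSet v)
    (R : Set β) (hR : IsTTransversal T G R)
    (hsize : ∀ Q ∈ P, k ≤ (Q \ R).ncard) :
    IsTTransversal T G (R \ F) :=
  transversal_avoids_twins_general k hk T G F P hF hdisj htwin R hR hsize
end

section
/- Let T be a tree with k vertices and Δ = Δ(T) ≥ 3. Let H be a Δ-uniform hypergraph, let w = k^{3k}, let B > w, and let C > 2·max(B·|V(H)|, k). Let H' be the B-blowup of H with each hyperedge duplicated C times, and let G be the vertex–hyperedge incidence graph of H'. Then the minimum size τ_T(G) of a T-transversal of G satisfies τ_T(G) ≥ τ(H) · (B − w), where τ(H) is the minimum size of a vertex cover of H. -/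
open Finset

namespace SimpleGraph

variable {α : Type*} {T : SimpleGraph α}

theorem IsTree.eq_of_adj_of_dist_add_one_eq (hT : T.IsTree) {r u v x : α}
    (hu : T.Adj u x) (hv : T.Adj v x)
    (hdu : T.dist r u + 1 = T.dist r x) (hdv : T.dist r v + 1 = T.dist r x) : u = v := by
  obtain ⟨p, -, hp⟩ := hT.connected.exists_path_of_dist r u
  obtain ⟨q, -, hq⟩ := hT.connected.exists_path_of_dist r v
  have hpx : (p.concat hu).IsPath := (p.concat hu).isPath_of_length_eq_dist (by simp [hp, hdu])
  have hqx : (q.concat hv).IsPath := (q.concat hv).isPath_of_length_eq_dist (by simp [hq, hdv])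
  have := (hT.isAcyclic.subsingleton_path r x).elim ⟨_, hpx⟩ ⟨_, hqx⟩
  simpa using congrArg (fun w : T.Path r x => w.1.penultimate) this

def commonNeighborGraph (T : SimpleGraph α) (s : Set α) : SimpleGraph α where
  Adj x y := x ≠ y ∧ ∃ p ∈ s, T.Adj p x ∧ T.Adj p y
  symm := ⟨fun _ _ ⟨hne, p, hp, hx, hy⟩ => ⟨hne.symm, p, hp, hy, hx⟩⟩
  loopless := ⟨fun _ h => h.1 rfl⟩

theorem nonempty_coloring_of_card_lower_neighbors_lt [Fintype α] [DecidableEq α]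
    (K : SimpleGraph α) [DecidableRel K.Adj] {β : Type*} [Fintype β] (f : α → ℕ)
    (h : ∀ a, #{x | K.Adj a x ∧ f x ≤ f a} < Fintype.card β) : Nonempty (K.Coloring β) := by
  classical
  suffices ∀ s : Finset α, ∃ c : α → β, ∀ x ∈ s, ∀ y ∈ s, K.Adj x y → c x ≠ c y by
    obtain ⟨c, hc⟩ := this univ
    exact ⟨Coloring.mk c fun hxy => hc _ (mem_univ _) _ (mem_univ _) hxy⟩
  intro s
  induction s using Finset.induction_on_max_value f with
  | empty => exact ⟨fun a => (Fintype.card_pos_iff.mp (Nat.zero_lt_of_lt (h a))).some, by simp⟩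
  | insert a s ha hmax ih =>
    obtain ⟨c, hc⟩ := ih
    have hused : #(({x ∈ s | K.Adj a x}).image c) < #(univ : Finset β) := by
      refine (card_image_le.trans (card_le_card fun x hx => ?_)).trans_lt (h a)
      simp only [mem_filter, mem_univ, true_and] at hx ⊢
      exact ⟨hx.2, hmax x hx.1⟩
    obtain ⟨b, -, hb⟩ := exists_mem_notMem_of_card_lt_card hused
    have hfresh : ∀ y ∈ s, K.Adj a y → b ≠ c y := fun y hy hay hby =>
      hb (mem_image_of_mem c (mem_filter.mpr ⟨hy, hay⟩) |> (hby ▸ ·))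
    refine ⟨Function.update c a b, ?_⟩
    have hne : ∀ y ∈ s, y ≠ a := fun y hy hya => ha (hya ▸ hy)
    simp only [mem_insert]
    rintro x (rfl | hx) y (rfl | hy) hxy
    · exact (hxy.ne rfl).elim
    · simpa [Function.update_of_ne (hne y hy)] using hfresh y hy hxy
    · simpa [Function.update_of_ne (hne x hx)] using (hfresh x hx hxy.symm).symm
    · simpa [Function.update_of_ne (hne x hx), Function.update_of_ne (hne y hy)] using
        hc x hx y hy hxy

theorem IsTree.exists_injOn_neighborSet [Fintype α] [DecidableRel T.Adj] (hT : T.IsTree)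
    {s : Set α} {β : Type*} [Fintype β] [Nonempty β]
    (hdeg : ∀ p ∈ s, T.degree p ≤ Fintype.card β) :
    ∃ c : α → β, ∀ p ∈ s, Set.InjOn c (T.neighborSet p) := by
  classical
  obtain ⟨r⟩ := hT.connected.nonempty
  set K := T.commonNeighborGraph s
  -- Order vertices by distance from `r`: a vertex conflicts with an earlier one only through
  -- its parent.
  have hparent : ∀ a x, K.Adj a x → T.dist r x ≤ T.dist r a →
      ∃ p ∈ s, T.Adj p a ∧ T.Adj p x ∧ T.dist r p + 1 = T.dist r a := by
    rintro a x ⟨hne, p, hp, hpa, hpx⟩ hle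
    refine ⟨p, hp, hpa, hpx, ?_⟩
    rcases hT.dist_eq_dist_add_one_of_adj r hpa with h | h
    · rcases hT.dist_eq_dist_add_one_of_adj r hpx with h' | h'
      · exact (hne (hT.eq_of_adj_of_dist_add_one_eq hpa.symm hpx.symm h.symm h'.symm)).elim
      · omega
    · exact h.symm
  have hlower : ∀ a, #{x | K.Adj a x ∧ T.dist r x ≤ T.dist r a} < Fintype.card β := by
    intro a
    by_cases hex : ∃ x, K.Adj a x ∧ T.dist r x ≤ T.dist r a
    · obtain ⟨x₀, hx₀, hle₀⟩ := hex
      obtain ⟨p, hp, hpa, -, hdp⟩ := hparent a x₀ hx₀ hle₀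
      have hsub : ({x | K.Adj a x ∧ T.dist r x ≤ T.dist r a} : Finset α) ⊆
          (T.neighborFinset p).erase a := by
        intro x hx
        obtain ⟨hax, hle⟩ := (mem_filter.mp hx).2
        obtain ⟨q, -, hqa, hqx, hdq⟩ := hparent a x hax hle
        rw [hT.eq_of_adj_of_dist_add_one_eq hqa hpa hdq hdp] at hqx
        exact mem_erase.mpr ⟨hax.1.symm, (T.mem_neighborFinset p x).mpr hqx⟩
      have hdeg_pos : 0 < T.degree p := T.degree_pos_iff_exists_adj p |>.mpr ⟨a, hpa⟩
      calc _ ≤ #((T.neighborFinset p).erase a) := card_le_card hsub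
        _ = T.degree p - 1 := by
          rw [card_erase_of_mem ((T.mem_neighborFinset p a).mpr hpa), card_neighborFinset_eq_degree]
        _ < Fintype.card β := by have := hdeg p hp; omega
    · rw [filter_false_of_mem fun x _ h => hex ⟨x, h⟩]
      exact Fintype.card_pos
  obtain ⟨c⟩ := nonempty_coloring_of_card_lower_neighbors_lt K _ hlower
  refine ⟨c, fun p hp x hx y hy hxy => ?_⟩
  by_contra hne
  exact c.valid ⟨hne, p, hp, hx, hy⟩ hxy

end SimpleGraph

theorem Finset.exists_superset_image_fst_eq {X ι : Type*} [DecidableEq X] [DecidableEq ι]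
    (i : ι) {e : Finset X} {N : Finset (X × ι)} (hN : N.image Prod.fst ⊆ e)
    (hinj : Set.InjOn Prod.fst (N : Set (X × ι))) :
    ∃ e' : Finset (X × ι), N ⊆ e' ∧ e'.card = e.card ∧ e'.image Prod.fst = e := by
  set R := (e \ N.image Prod.fst).image fun v => (v, i)
  have hdisj : Disjoint N R := by
    refine disjoint_left.mpr fun p hpN hpR => ?_
    obtain ⟨v, hv, rfl⟩ := mem_image.mp hpR
    exact (mem_sdiff.mp hv).2 (mem_image_of_mem Prod.fst hpN)
  have hR : #R = #e - #N := by
    rw [card_image_of_injective _ fun _ _ h => congrArg Prod.fst h, card_sdiff_of_subset hN,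
      card_image_of_injOn hinj]
  refine ⟨N ∪ R, subset_union_left, ?_, ?_⟩
  · have := card_le_card hN
    rw [card_image_of_injOn hinj] at this
    rw [card_union_of_disjoint hdisj, hR]
    omega
  · rw [image_union, image_image, Function.comp_def, image_id', union_sdiff_of_subset hN]

noncomputable def vertexCoverNumber {V : Type*} (E : Finset (Finset V)) : ℕ :=
  sInf {n : ℕ | ∃ S : Finset V, (∀ e ∈ E, ∃ v ∈ e, v ∈ S) ∧ S.card = n}

theorem vertexCoverNumber_le_card {V : Type*} {E : Finset (Finset V)} {S : Finset V}
    (hS : ∀ e ∈ E, ∃ v ∈ e, v ∈ S) : vertexCoverNumber E ≤ S.card :=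
  Nat.sInf_le ⟨S, hS, rfl⟩

theorem exists_mem_forall_card_fiber_lt {V ι : Type*} [DecidableEq V] [Fintype ι]
    [DecidableEq ι] {E : Finset (Finset V)} {P : Finset (V × ι)} {m : ℕ}
    (h : #P < vertexCoverNumber E * m) : ∃ e ∈ E, ∀ v ∈ e, #{i | (v, i) ∈ P} < m := by
  by_contra! hcov
  have hm : 0 < m := Nat.pos_of_ne_zero fun hm => by simp [hm] at h
  set W := {v ∈ P.image Prod.fst | m ≤ #{i | (v, i) ∈ P}}
  have hW : ∀ e ∈ E, ∃ v ∈ e, v ∈ W := by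
    intro e he
    obtain ⟨v, hv, hmv⟩ := hcov e he
    obtain ⟨i, hi⟩ := card_pos.mp (hm.trans_le hmv)
    exact ⟨v, hv, mem_filter.mpr ⟨mem_image.mpr ⟨(v, i), (mem_filter.mp hi).2, rfl⟩, hmv⟩⟩
  have hWP : #W * m ≤ #P :=
    calc #W * m ≤ ∑ v ∈ W, #{i | (v, i) ∈ P} := by
          simpa using card_nsmul_le_sum W _ m fun v hv => (mem_filter.mp hv).2
      _ = #{p ∈ W ×ˢ univ | p ∈ P} := by simp only [card_filter, sum_product]
      _ ≤ #P := card_le_card fun p hp => (mem_filter.mp hp).2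
  exact h.not_ge ((Nat.mul_le_mul_right m (vertexCoverNumber_le_card hW)).trans hWP)

theorem exists_injective_hom_incidenceGraph {α X Y : Type*} {T : SimpleGraph α}
    {P : α → Prop} (hP : ∀ u v, T.Adj u v → (P u ↔ ¬ P v)) {mem : X → Y → Prop}
    {g : α → X} {h : α → Y} (hg : Function.Injective g) (hh : Function.Injective h)
    (hmem : ∀ p x, P p → T.Adj p x → mem (g x) (h p)) :
    ∃ f : α → X ⊕ Y, Function.Injective f ∧
      (∀ u v, T.Adj u v → (incidenceGraph mem).Adj (f u) (f v)) ∧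
      ∀ u, f u = .inl (g u) ∨ f u = .inr (h u) := by
  classical
  refine ⟨fun u => if P u then .inr (h u) else .inl (g u), ?_, ?_, ?_⟩
  · intro u v huv
    by_cases hu : P u <;> by_cases hv : P v <;>
      simp only [hu, hv, if_true, if_false, Sum.inl.injEq, Sum.inr.injEq, reduceCtorEq] at huv
    exacts [hh huv, hg huv]
  · intro u v huv
    by_cases hu : P u
    · have hv : ¬ P v := (hP u v huv).mp hu
      simp only [hu, hv, if_true, if_false]
      exact Or.inr ⟨g v, h u, rfl, rfl, hmem u v hu huv⟩
    · have hv : P v := not_not.mp ((hP u v huv).not.mp hu)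
      simp only [hu, hv, if_true, if_false]
      exact Or.inl ⟨g u, h v, rfl, rfl, hmem v u hv huv.symm⟩
  · intro u
    by_cases hu : P u <;> simp [hu]

theorem exists_forall_le_min_sup_filter {α : Type*} [Fintype α] (χ : α → Fin 2) (f : α → ℕ) :
    ∃ i, ∀ p, χ p = i →
      f p ≤ min (({v | χ v = 0} : Finset α).sup f) (({v | χ v = 1} : Finset α).sup f) := by
  rcases min_choice (({v | χ v = 0} : Finset α).sup f) (({v | χ v = 1} : Finset α).sup f) with h | h
  · exact ⟨0, fun p hp => h.symm ▸ le_sup (f := f) (mem_filter.mpr ⟨mem_univ p, hp⟩)⟩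
  · exact ⟨1, fun p hp => h.symm ▸ le_sup (f := f) (mem_filter.mpr ⟨mem_univ p, hp⟩)⟩

theorem exists_embedding_forall_notMem {α ι : Type*} [Fintype α] [Fintype ι] [DecidableEq ι]
    {s : Finset ι} (h : #s + Fintype.card α ≤ Fintype.card ι) : ∃ f : α ↪ ι, ∀ u, f u ∉ s := by
  obtain ⟨f⟩ := Function.Embedding.nonempty_of_card_le (α := α) (β := {i // i ∉ s}) (by
    rw [Fintype.card_subtype_compl, Fintype.card_coe]
    omega)
  exact ⟨f.trans (.subtype _), fun u => (f u).2⟩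

section Blowup

variable {V : Type*} [DecidableEq V] (E : Finset (Finset V)) (Δ B C : ℕ)

abbrev BlowupEdge := {e' : Finset (V × Fin B) // e'.card = Δ ∧ e'.image Prod.fst ∈ E}

abbrev blowupIncidenceGraph : SimpleGraph ((V × Fin B) ⊕ (BlowupEdge E Δ B × Fin C)) :=
  incidenceGraph fun (p : V × Fin B) (ec : BlowupEdge E Δ B × Fin C) => p ∈ ec.1.val

variable {E Δ B C}

theorem exists_blowupEdge_superset_image {α : Type*} {e : Finset V} (he : e ∈ E)
    (he_card : e.card = Δ) (i : Fin B) {g : α → V × Fin B} (hg : ∀ x, (g x).1 ∈ e)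
    {s : Finset α} (hinj : Set.InjOn (Prod.fst ∘ g) s) :
    ∃ ed : BlowupEdge E Δ B, s.image g ⊆ ed.1 := by
  have hfst : (s.image g).image Prod.fst ⊆ e := by
    rw [image_image]
    exact image_subset_iff.mpr fun x _ => hg x
  have hinj' : Set.InjOn Prod.fst (s.image g : Set (V × Fin B)) := by
    rintro _ hp _ hq hpq
    obtain ⟨x, hx, rfl⟩ := mem_image.mp hp
    obtain ⟨y, hy, rfl⟩ := mem_image.mp hq
    rw [hinj hx hy hpq]
  obtain ⟨e', hsub, hcard, himg⟩ := exists_superset_image_fst_eq i hfst hinj'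
  exact ⟨⟨e', hcard.trans he_card, himg ▸ he⟩, hsub⟩

theorem not_isTTransversal_blowupIncidenceGraph {α : Type*} [Fintype α] {T : SimpleGraph α}
    [DecidableRel T.Adj] (hT : T.IsTree) {P : α → Prop} (hP : ∀ u v, T.Adj u v → (P u ↔ ¬ P v))
    (hdeg : ∀ p, P p → T.degree p ≤ Δ) {e : Finset V} (he : e ∈ E) (he_card : e.card = Δ)
    (he_ne : e.Nonempty) {S : Finset ((V × Fin B) ⊕ (BlowupEdge E Δ B × Fin C))}
    (hfree : ∀ v ∈ e, #{i | (v, i) ∈ S.toLeft} + Fintype.card α ≤ B)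
    (hlabels : #S + Fintype.card α ≤ C) :
    ¬ IsTTransversal T (blowupIncidenceGraph E Δ B C) S := by
  classical
  have : Nonempty e := he_ne.to_subtype
  obtain ⟨c, hc⟩ := hT.exists_injOn_neighborSet (s := {p | P p}) (β := e)
    (by simpa [he_card] using hdeg)
  have hcopies : ∀ v : e, ∃ ι : α ↪ Fin B, ∀ u, .inl ((v : V), ι u) ∉ S := fun v =>
    (exists_embedding_forall_notMem (s := {i | ((v : V), i) ∈ S.toLeft})
      (by rw [Fintype.card_fin]; exact hfree v v.2)).imp fun _ h u hu =>
        h u (mem_filter.mpr ⟨mem_univ _, mem_toLeft.mpr hu⟩)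
  choose idx hidx using hcopies
  obtain ⟨lab, hlab⟩ := exists_embedding_forall_notMem (α := α) (s := S.toRight.image Prod.snd)
    (by
      rw [Fintype.card_fin]
      exact (Nat.add_le_add_right (card_image_le.trans card_toRight_le) _).trans hlabels)
  set g : α → V × Fin B := fun u => ((c u : V), idx (c u) u)
  have hg : Function.Injective g := by
    intro u v huv
    obtain ⟨hcuv, hidxuv⟩ := Prod.mk.inj huv
    rw [Subtype.ext hcuv] at hidxuv
    exact (idx (c v)).injective hidxuv
  have hedge : ∀ u, ∃ ed : BlowupEdge E Δ B, P u → (T.neighborFinset u).image g ⊆ ed.1 := by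
    intro u
    by_cases hu : P u
    · exact (exists_blowupEdge_superset_image he he_card (g u).2 (g := g) (fun x => (c x).2)
        fun x hx y hy hxy => hc u hu (by simpa using hx) (by simpa using hy) (Subtype.ext hxy)).imp
        fun _ h _ => h
    · exact (exists_blowupEdge_superset_image he he_card (g u).2 (g := g) (fun x => (c x).2)
        (s := ∅) (by simp)).imp fun _ _ h => (hu h).elim
  choose ed hed using hedge
  intro hS
  obtain ⟨f, hf_inj, hf_hom, hf⟩ := exists_injective_hom_incidenceGraph hP hg
    (h := fun u => (ed u, lab u)) (mem := fun p ec => p ∈ ec.1.val)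
    (fun u v huv => lab.injective (Prod.mk.inj huv).2)
    (fun p x hp hpx => hed p hp (mem_image_of_mem g ((T.mem_neighborFinset p x).mpr hpx)))
  obtain ⟨u, hu⟩ := hS f hf_inj hf_hom
  rcases hf u with h | h <;> rw [h] at hu
  exacts [hidx _ u hu, hlab u (mem_image.mpr ⟨_, mem_toRight.mpr hu, rfl⟩)]

end Blowup

theorem soundness_lower_bound_general {α V : Type*} [Fintype α] [Fintype V] [DecidableEq V]
    (k Δ B C : ℕ) (hk : Fintype.card α = k)
    (T : SimpleGraph α) [DecidableRel T.Adj] (htree : T.IsTree)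
    (χ : α → Fin 2) (hχ : ∀ u v, T.Adj u v → χ u ≠ χ v)
    (hΔdef : Δ = min ((Finset.univ.filter fun v => χ v = 0).sup (fun v => T.degree v))
                     ((Finset.univ.filter fun v => χ v = 1).sup (fun v => T.degree v)))
    (hΔ3 : 3 ≤ Δ)
    (hC : 2 * max (B * Fintype.card V) k < C)
    (E : Finset (Finset V)) (hunif : ∀ e ∈ E, e.card = Δ) :
    sInf {n : ℕ | ∃ S : Finset V, (∀ e ∈ E, ∃ v ∈ e, v ∈ S) ∧ S.card = n} * (B - k ^ (3 * k))
      ≤ sInf {n : ℕ | ∃ S : Finset ((V × Fin B) ⊕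
            ({e' : Finset (V × Fin B) // e'.card = Δ ∧ e'.image Prod.fst ∈ E} × Fin C)),
          IsTTransversal T
            (incidenceGraph (fun (p : V × Fin B)
                (ec : {e' : Finset (V × Fin B) // e'.card = Δ ∧ e'.image Prod.fst ∈ E} × Fin C)
                => p ∈ ec.1.val)) ↑S ∧ S.card = n} := by
  have hα : Nonempty α := htree.connected.nonempty
  refine le_csInf ⟨_, univ, fun _ _ _ => ⟨hα.some, mem_univ _⟩, rfl⟩ ?_
  rintro _ ⟨S, hS, rfl⟩
  by_contra! hlt
  change #S < vertexCoverNumber E * _ at hlt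
  have hτ : vertexCoverNumber E ≤ Fintype.card V := vertexCoverNumber_le_card fun e he =>
    (card_pos.mp (by rw [hunif e he]; omega)).imp fun v hv => ⟨hv, mem_univ v⟩
  obtain ⟨e, he, hfew⟩ := exists_mem_forall_card_fiber_lt (card_toLeft_le.trans_lt hlt)
  obtain ⟨i₀, hi₀⟩ := exists_forall_le_min_sup_filter χ fun v => T.degree v
  have hkw : k ≤ k ^ (3 * k) := Nat.le_self_pow (by have := Fintype.card_pos (α := α); omega) k
  refine not_isTTransversal_blowupIncidenceGraph htree (P := (χ · = i₀)) (fun u v huv => ?_)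
    (fun p hp => hΔdef ▸ hi₀ p hp) he (hunif e he) (card_pos.mp (by rw [hunif e he]; omega))
    (fun v hv => ?_) ?_ hS
  · have := hχ u v huv
    omega
  · have := hfew v hv
    omega
  · have : vertexCoverNumber E * (B - k ^ (3 * k)) ≤ B * Fintype.card V :=
      mul_comm B _ ▸ Nat.mul_le_mul hτ (Nat.sub_le B _)
    have := le_max_left (B * Fintype.card V) k
    have := le_max_right (B * Fintype.card V) k
    omega

/-- Soundness: let `T` be a tree with `k` vertices and `Δ = Δ(T) ≥ 3` (where `Δ(T)` is computed
from a proper 2-coloring `χ` of `T`), let `H = (V, E)` be a `Δ`-uniform hypergraph,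
`w = k^(3k)`, `B > w`, `C > 2·max(B·|V(H)|, k)`, and let `G` be the vertex–hyperedge incidence
graph of the `B`-blowup of `H` with each hyperedge duplicated `C` times.  Then
`τ_T(G) ≥ τ(H) · (B - w)`. -/
theorem soundness_lower_bound {α V : Type*} [Fintype α] [Fintype V] [DecidableEq V]
    (k Δ B C : ℕ) (hk : Fintype.card α = k)
    (T : SimpleGraph α) [DecidableRel T.Adj] (htree : T.IsTree)
    (χ : α → Fin 2) (hχ : ∀ u v, T.Adj u v → χ u ≠ χ v)
    (hΔdef : Δ = min ((Finset.univ.filter fun v => χ v = 0).sup (fun v => T.degree v))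
                     ((Finset.univ.filter fun v => χ v = 1).sup (fun v => T.degree v)))
    (hΔ3 : 3 ≤ Δ)
    (hB : k ^ (3 * k) < B) (hC : 2 * max (B * Fintype.card V) k < C)
    (E : Finset (Finset V)) (hunif : ∀ e ∈ E, e.card = Δ) :
    sInf {n : ℕ | ∃ S : Finset V, (∀ e ∈ E, ∃ v ∈ e, v ∈ S) ∧ S.card = n} * (B - k ^ (3 * k))
      ≤ sInf {n : ℕ | ∃ S : Finset ((V × Fin B) ⊕
            ({e' : Finset (V × Fin B) // e'.card = Δ ∧ e'.image Prod.fst ∈ E} × Fin C)),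
          IsTTransversal T
            (incidenceGraph (fun (p : V × Fin B)
                (ec : {e' : Finset (V × Fin B) // e'.card = Δ ∧ e'.image Prod.fst ∈ E} × Fin C)
                => p ∈ ec.1.val)) ↑S ∧ S.card = n} :=
  soundness_lower_bound_general k Δ B C hk T htree χ hχ hΔdef hΔ3 hC E hunif
end
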